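/- arXiv:1508.03971 — 3 statements merged into one kernel-verified Lean document; each statement's English description precedes it below -/
import Mathlib

section
/- Let G₁ and G₂ be finite nonempty simple graphs and let G = G₁ + G₂ be their join. Then the clique graph K(G) is a complete graph if and only if K(G₁) is complete or K(G₂) is complete. -/
open SimpleGraph

universe u v

/-- A clique (maximal complete subgraph) of `G`, viewed as a vertex set. -/
def IsMaxClique {V : Type u} (G : SimpleGraph V) (s : Set V) : Prop :=
  G.IsClique s ∧ ∀ t : Set V, G.IsClique t → s ⊆ t → s = t

/-- The set of all cliques (maximal complete subgraphs) of `G`. -/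
def maxCliques {V : Type u} (G : SimpleGraph V) : Set (Set V) :=
  {s | IsMaxClique G s}

/-- The clique graph `K(G)`: vertices are the cliques of `G`, two distinct cliques
being adjacent iff they intersect. -/
def cliqueGraph {V : Type u} (G : SimpleGraph V) : SimpleGraph ↥(maxCliques G) where
  Adj Q R := Q ≠ R ∧ ((Q : Set V) ∩ (R : Set V)).Nonempty
  symm := ⟨by
    intro Q R h
    refine ⟨h.1.symm, ?_⟩
    rw [Set.inter_comm]
    exact h.2⟩
  loopless := ⟨fun Q h => h.1 rfl⟩

/-- A graph is complete iff any two distinct vertices are adjacent. -/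
def IsCompleteGraph {V : Type u} (G : SimpleGraph V) : Prop :=
  ∀ x y : V, x ≠ y → G.Adj x y

/-- The join `G₁ + G₂` of two graphs on disjoint vertex sets: all edges of `G₁`
and of `G₂`, plus all edges between the two vertex sets. -/
def joinGraph {V₁ : Type u} {V₂ : Type v} (G₁ : SimpleGraph V₁) (G₂ : SimpleGraph V₂) :
    SimpleGraph (V₁ ⊕ V₂) where
  Adj x y :=
    match x, y with
    | Sum.inl a, Sum.inl b => G₁.Adj a b
    | Sum.inr a, Sum.inr b => G₂.Adj a b
    | Sum.inl _, Sum.inr _ => True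
    | Sum.inr _, Sum.inl _ => True
  symm := ⟨by rintro (a | a) (b | b) h <;> first | exact h.symm | trivial⟩
  loopless := ⟨by rintro (a | a) h <;> exact (SimpleGraph.irrefl _) h⟩

/-! The cliques of `G₁ + G₂` are exactly the sets `A ⊔ B` with `A` a clique of `G₁` and `B` a
clique of `G₂`, and two such sets meet iff their `G₁`-parts or their `G₂`-parts meet. Since
cliques of a graph on a nonempty vertex set are nonempty, `K(G)` is complete iff any two cliques
of `G` meet. So if `K(G₁)` is complete, any two cliques of the join meet in their `G₁`-parts;
and if neither is, disjoint cliques `A, A'` of `G₁` and `B, B'` of `G₂` yield disjoint cliques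
`A ⊔ B` and `A' ⊔ B'` of the join. -/

section

variable {V : Type u} {G : SimpleGraph V}

theorem IsMaxClique.nonempty [Nonempty V] {s : Set V} (h : IsMaxClique G s) : s.Nonempty := by
  obtain ⟨v⟩ := ‹Nonempty V›
  rw [Set.nonempty_iff_ne_empty]
  rintro rfl
  exact Set.singleton_ne_empty v (h.2 {v} (isClique_singleton v) (Set.empty_subset _)).symm

def CliquesIntersect (G : SimpleGraph V) : Prop :=
  ∀ Q ∈ maxCliques G, ∀ R ∈ maxCliques G, (Q ∩ R).Nonempty

theorem isCompleteGraph_cliqueGraph_iff [Nonempty V] :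
    IsCompleteGraph (cliqueGraph G) ↔ CliquesIntersect G := by
  refine ⟨fun h Q hQ R hR => ?_, fun h Q R hQR => ⟨hQR, h Q Q.2 R R.2⟩⟩
  by_cases hQR : Q = R
  · subst hQR
    simpa using IsMaxClique.nonempty hQ
  · exact (h ⟨Q, hQ⟩ ⟨R, hR⟩ (fun e => hQR (congrArg Subtype.val e))).2

end

@[simp]
theorem Set.preimage_inl_image_inl {α β : Type*} (s : Set α) :
    Sum.inl ⁻¹' (Sum.inl '' s : Set (α ⊕ β)) = s :=
  Sum.inl_injective.preimage_image s

@[simp]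
theorem Set.preimage_inr_image_inr {α β : Type*} (s : Set β) :
    Sum.inr ⁻¹' (Sum.inr '' s : Set (α ⊕ β)) = s :=
  Sum.inr_injective.preimage_image s

theorem Set.inter_nonempty_iff_sum {α β : Type*} {s t : Set (α ⊕ β)} :
    (s ∩ t).Nonempty ↔
      (Sum.inl ⁻¹' s ∩ Sum.inl ⁻¹' t).Nonempty ∨ (Sum.inr ⁻¹' s ∩ Sum.inr ⁻¹' t).Nonempty := by
  simp [Set.Nonempty, Sum.exists]

section

variable {V₁ : Type u} {V₂ : Type v} {G₁ : SimpleGraph V₁} {G₂ : SimpleGraph V₂}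

theorem joinGraph_isClique_iff {s : Set (V₁ ⊕ V₂)} :
    (joinGraph G₁ G₂).IsClique s ↔ G₁.IsClique (Sum.inl ⁻¹' s) ∧ G₂.IsClique (Sum.inr ⁻¹' s) := by
  refine ⟨fun h => ⟨fun a ha b hb hab => h ha hb (Sum.inl_injective.ne hab),
    fun a ha b hb hab => h ha hb (Sum.inr_injective.ne hab)⟩, fun ⟨h₁, h₂⟩ => ?_⟩
  rintro (a | a) ha (b | b) hb hab
  exacts [h₁ ha hb (fun e => hab (congrArg _ e)), trivial, trivial,
    h₂ ha hb (fun e => hab (congrArg _ e))]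

theorem joinGraph_isMaxClique_iff {s : Set (V₁ ⊕ V₂)} :
    IsMaxClique (joinGraph G₁ G₂) s ↔
      IsMaxClique G₁ (Sum.inl ⁻¹' s) ∧ IsMaxClique G₂ (Sum.inr ⁻¹' s) := by
  have hs := Set.image_preimage_inl_union_image_preimage_inr s
  simp only [IsMaxClique, joinGraph_isClique_iff]
  constructor
  · rintro ⟨⟨h₁, h₂⟩, hmax⟩
    refine ⟨⟨h₁, fun t ht hst => ?_⟩, ⟨h₂, fun t ht hst => ?_⟩⟩
    · have := hmax (Sum.inl '' t ∪ Sum.inr '' (Sum.inr ⁻¹' s)) (by simpa using ⟨ht, h₂⟩)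
        (hs.superset.trans <| Set.union_subset_union_left _ (Set.image_mono hst))
      rw [this]
      simp
    · have := hmax (Sum.inl '' (Sum.inl ⁻¹' s) ∪ Sum.inr '' t) (by simpa using ⟨h₁, ht⟩)
        (hs.superset.trans <| Set.union_subset_union_right _ (Set.image_mono hst))
      rw [this]
      simp
  · rintro ⟨⟨h₁, hmax₁⟩, ⟨h₂, hmax₂⟩⟩
    refine ⟨⟨h₁, h₂⟩, fun t ⟨ht₁, ht₂⟩ hst => ?_⟩
    rw [← hs, ← Set.image_preimage_inl_union_image_preimage_inr t,
      hmax₁ _ ht₁ (Set.preimage_mono hst), hmax₂ _ ht₂ (Set.preimage_mono hst)]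

theorem image_inl_union_image_inr_mem_maxCliques {A : Set V₁} {B : Set V₂}
    (hA : A ∈ maxCliques G₁) (hB : B ∈ maxCliques G₂) :
    Sum.inl '' A ∪ Sum.inr '' B ∈ maxCliques (joinGraph G₁ G₂) := by
  simpa [maxCliques, joinGraph_isMaxClique_iff] using And.intro hA hB

theorem cliquesIntersect_joinGraph_iff :
    CliquesIntersect (joinGraph G₁ G₂) ↔ CliquesIntersect G₁ ∨ CliquesIntersect G₂ := by
  constructor
  · intro h
    by_contra! hn
    simp only [CliquesIntersect, not_forall, Set.not_nonempty_iff_eq_empty] at hn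
    obtain ⟨⟨A, hA, A', hA', hAA'⟩, ⟨B, hB, B', hB', hBB'⟩⟩ := hn
    have := h _ (image_inl_union_image_inr_mem_maxCliques hA hB)
      _ (image_inl_union_image_inr_mem_maxCliques hA' hB')
    simp [Set.inter_nonempty_iff_sum, hAA', hBB'] at this
  · rintro (h | h) Q hQ R hR <;> rw [Set.inter_nonempty_iff_sum]
    · exact .inl (h _ (joinGraph_isMaxClique_iff.1 hQ).1 _ (joinGraph_isMaxClique_iff.1 hR).1)
    · exact .inr (h _ (joinGraph_isMaxClique_iff.1 hQ).2 _ (joinGraph_isMaxClique_iff.1 hR).2)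

end

theorem cliqueGraph_join_complete_iff_general {V₁ V₂ : Type u}
    [Nonempty V₁] [Nonempty V₂] (G₁ : SimpleGraph V₁) (G₂ : SimpleGraph V₂) :
    IsCompleteGraph (cliqueGraph (joinGraph G₁ G₂)) ↔
      IsCompleteGraph (cliqueGraph G₁) ∨ IsCompleteGraph (cliqueGraph G₂) := by
  simp only [isCompleteGraph_cliqueGraph_iff]
  exact cliquesIntersect_joinGraph_iff

/-- The clique graph of a join `G₁ + G₂` is complete iff the clique graph of `G₁`
is complete or the clique graph of `G₂` is complete. -/
theorem cliqueGraph_join_complete_iff {V₁ V₂ : Type u} [Finite V₁] [Finite V₂]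
    [Nonempty V₁] [Nonempty V₂] (G₁ : SimpleGraph V₁) (G₂ : SimpleGraph V₂) :
    IsCompleteGraph (cliqueGraph (joinGraph G₁ G₂)) ↔
      IsCompleteGraph (cliqueGraph G₁) ∨ IsCompleteGraph (cliqueGraph G₂) :=
  cliqueGraph_join_complete_iff_general G₁ G₂
end

section
/- Let G₁ and G₂ be finite clique-Helly simple graphs, each having at least two vertices and no isolated vertices, and let G = G₁ □ G₂ be their Cartesian product. Then K²(G) ≅ G. -/
open SimpleGraph

universe u v

/-- A finite simple graph bundled with its vertex type. -/
structure BGraph : Type (u + 1) where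
  V : Type u
  [finV : Finite V]
  graph : SimpleGraph V

attribute [instance] BGraph.finV

/-- Bundle a finite simple graph. -/
def BGraph.of {V : Type u} [Finite V] (G : SimpleGraph V) : BGraph.{u} :=
  { V := V, graph := G }

/-- The bundled clique graph operator `K`; iterated clique graphs are `KB^[n]`. -/
def KB : BGraph.{u} → BGraph.{u} :=
  fun H => { V := ↥(maxCliques H.graph), graph := cliqueGraph H.graph }

/-- A graph is `K`-convergent if its sequence of iterated clique graphs is finite
up to isomorphism, i.e. two of its iterated clique graphs are isomorphic. -/
def KConvergent (H : BGraph.{u}) : Prop :=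
  ∃ m n : ℕ, m < n ∧ Nonempty ((KB^[n] H).graph ≃g (KB^[m] H).graph)

/-- A graph is `K`-periodic if `Kⁿ(G) ≅ G` for some `n > 0`. -/
def KPeriodic (H : BGraph.{u}) : Prop :=
  ∃ n : ℕ, 0 < n ∧ Nonempty ((KB^[n] H).graph ≃g H.graph)

/-- A graph is clique-Helly if every nonempty family of pairwise intersecting cliques
has nonempty total intersection. -/
def CliqueHelly {V : Type u} (G : SimpleGraph V) : Prop :=
  ∀ F : Set (Set V), F.Nonempty → (∀ s ∈ F, s ∈ maxCliques G) →
    (∀ s ∈ F, ∀ t ∈ F, (s ∩ t).Nonempty) → (⋂ s ∈ F, s).Nonempty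

/-!
Every clique of `G₁ □ G₂` is horizontal (`Q × {h}`) or vertical (`{g} × R`). So `G₁ □ G₂` is
again clique-Helly: pairwise intersecting horizontal cliques lie on a common row and project to
pairwise intersecting cliques of `G₁`; and if the family contains a vertical and a horizontal
clique, their crossing point lies in every member.

In a clique-Helly graph `G` every clique of `K(G)` is contained in a star `{C | v ∈ C}`, so when
no star is contained in another, `v ↦ star v` is a bijection onto the vertices of `K²(G)`. Two
stars meet iff `v` and `w` lie in a common clique, i.e. are equal or adjacent, so this bijection
is an isomorphism. In `G₁ □ G₂` without isolated vertices the star of `p` contains a horizontal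
and a vertical clique through `p`, which meet only in `p`; hence stars are separated.
-/

section MaxCliques

variable {V : Type u} {G : SimpleGraph V} {s : Set V}

theorem isMaxClique_iff_maximal : IsMaxClique G s ↔ Maximal G.IsClique s :=
  ⟨fun h => ⟨h.1, fun t ht hst => (h.2 t ht hst).ge⟩,
    fun h => ⟨h.1, fun _ ht hst => hst.antisymm (h.2 ht hst)⟩⟩

theorem SimpleGraph.IsClique.exists_subset_mem_maxCliques [Finite V] (hs : G.IsClique s) :
    ∃ C ∈ maxCliques G, s ⊆ C := by
  obtain ⟨C, hsC, hC⟩ := Finite.exists_le_maximal hs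
  exact ⟨C, isMaxClique_iff_maximal.2 hC, hsC⟩

theorem exists_mem_maxCliques_of_mem [Finite V] (v : V) : ∃ C ∈ maxCliques G, v ∈ C :=
  let ⟨C, hC, hvC⟩ := (G.isClique_singleton v).exists_subset_mem_maxCliques
  ⟨C, hC, hvC rfl⟩

theorem nonempty_of_mem_maxCliques [Nonempty V] (hs : s ∈ maxCliques G) : s.Nonempty := by
  obtain ⟨v⟩ := ‹Nonempty V›
  by_contra hempty
  rw [Set.not_nonempty_iff_eq_empty] at hempty
  subst hempty
  exact Set.singleton_ne_empty v (hs.2 {v} (G.isClique_singleton v) (Set.empty_subset _)).symm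

end MaxCliques

section CliqueStar

variable {V : Type u} {G : SimpleGraph V}

def cliqueStar (G : SimpleGraph V) (v : V) : Set (maxCliques G) :=
  {C | v ∈ (C : Set V)}

theorem isClique_cliqueStar (v : V) : (cliqueGraph G).IsClique (cliqueStar G v) :=
  fun _ hC _ hD hCD => ⟨hCD, v, hC, hD⟩

theorem cliqueStar_nonempty [Finite V] (v : V) : (cliqueStar G v).Nonempty :=
  let ⟨C, hC, hvC⟩ := exists_mem_maxCliques_of_mem (G := G) v
  ⟨⟨C, hC⟩, hvC⟩

theorem cliqueStar_inter_nonempty_iff [Finite V] {v w : V} :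
    (cliqueStar G v ∩ cliqueStar G w).Nonempty ↔ v = w ∨ G.Adj v w := by
  constructor
  · rintro ⟨C, hvC, hwC⟩
    exact (eq_or_ne v w).imp_right (C.2.1 hvC hwC)
  · rintro (rfl | hvw)
    · simpa using cliqueStar_nonempty v
    · obtain ⟨C, hC, hvwC⟩ :=
        (G.isClique_pair.2 fun _ => hvw).exists_subset_mem_maxCliques
      exact ⟨⟨C, hC⟩, hvwC (Set.mem_insert _ _), hvwC (Set.mem_insert_of_mem _ rfl)⟩

theorem CliqueHelly.exists_subset_cliqueStar [Nonempty V] (hH : CliqueHelly G)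
    {T : Set (maxCliques G)} (hT : (cliqueGraph G).IsClique T) (hTne : T.Nonempty) :
    ∃ v, T ⊆ cliqueStar G v := by
  obtain ⟨v, hv⟩ := hH (Subtype.val '' T) (hTne.image _) (by rintro _ ⟨C, -, rfl⟩; exact C.2)
    (by
      rintro _ ⟨C, hC, rfl⟩ _ ⟨D, hD, rfl⟩
      obtain rfl | hCD := eq_or_ne C D
      · simpa using nonempty_of_mem_maxCliques C.2
      · exact (hT hC hD hCD).2)
  exact ⟨v, fun C hC => Set.mem_iInter₂.1 hv _ (Set.mem_image_of_mem _ hC)⟩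

def CliqueStarsSeparated (G : SimpleGraph V) : Prop :=
  ∀ v w, cliqueStar G v ⊆ cliqueStar G w → v = w

theorem cliqueStar_mem_maxCliques [Finite V] (hH : CliqueHelly G)
    (hsep : CliqueStarsSeparated G) (v : V) :
    cliqueStar G v ∈ maxCliques (cliqueGraph G) := by
  have : Nonempty V := ⟨v⟩
  refine ⟨isClique_cliqueStar v, fun T hT hvT => hvT.antisymm ?_⟩
  obtain ⟨w, hTw⟩ := hH.exists_subset_cliqueStar hT ((cliqueStar_nonempty v).mono hvT)
  rwa [hsep v w (hvT.trans hTw)]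

theorem CliqueHelly.exists_cliqueStar_eq [Finite V] [Nonempty V] (hH : CliqueHelly G)
    {T : Set (maxCliques G)} (hT : T ∈ maxCliques (cliqueGraph G)) :
    ∃ v, cliqueStar G v = T := by
  obtain ⟨C, -⟩ := cliqueStar_nonempty (G := G) (Classical.arbitrary V)
  have : Nonempty (maxCliques G) := ⟨C⟩
  obtain ⟨v, hTv⟩ := hH.exists_subset_cliqueStar hT.1 (nonempty_of_mem_maxCliques hT)
  exact ⟨v, (hT.2 _ (isClique_cliqueStar v) hTv).symm⟩

theorem CliqueHelly.nonempty_iso_cliqueGraph_cliqueGraph [Finite V] [Nonempty V]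
    (hH : CliqueHelly G) (hsep : CliqueStarsSeparated G) :
    Nonempty (cliqueGraph (cliqueGraph G) ≃g G) := by
  let f : V → maxCliques (cliqueGraph G) := fun v => ⟨cliqueStar G v,
    cliqueStar_mem_maxCliques hH hsep v⟩
  have hf : Function.Bijective f :=
    ⟨fun v w hvw => hsep v w (congrArg Subtype.val hvw).le, fun T =>
      let ⟨v, hv⟩ := hH.exists_cliqueStar_eq T.2
      ⟨v, Subtype.ext hv⟩⟩
  refine ⟨(⟨Equiv.ofBijective f hf, fun {v w} => ?_⟩ : G ≃g _).symm⟩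
  change f v ≠ f w ∧ (cliqueStar G v ∩ cliqueStar G w).Nonempty ↔ G.Adj v w
  rw [hf.1.ne_iff, cliqueStar_inter_nonempty_iff]
  exact ⟨fun ⟨hne, h⟩ => h.resolve_left hne, fun h => ⟨h.ne, Or.inr h⟩⟩

end CliqueStar

section BoxProd

variable {V : Type u} {W : Type v} {G₁ : SimpleGraph V} {G₂ : SimpleGraph W}
  {s : Set (V × W)} {x y : V × W}

namespace SimpleGraph.IsClique

theorem boxProd_fst_eq_or_snd_eq (hs : (G₁ □ G₂).IsClique s) (hx : x ∈ s) (hy : y ∈ s) :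
    x.1 = y.1 ∨ x.2 = y.2 := by
  obtain rfl | hxy := eq_or_ne x y
  · exact Or.inl rfl
  rcases boxProd_adj.1 (hs hx hy hxy) with ⟨-, h⟩ | ⟨-, h⟩
  · exact Or.inr h
  · exact Or.inl h

theorem boxProd_snd_eq_or_fst_eq (hs : (G₁ □ G₂).IsClique s) :
    (∀ x ∈ s, ∀ y ∈ s, x.2 = y.2) ∨ ∀ x ∈ s, ∀ y ∈ s, x.1 = y.1 := by
  refine or_iff_not_imp_left.2 fun hnot => ?_
  push Not at hnot
  obtain ⟨a, ha, b, hb, hab⟩ := hnot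
  have hfst : ∀ z ∈ s, z.1 = a.1 := fun z hz => by
    by_cases hza : z.2 = a.2
    · exact ((hs.boxProd_fst_eq_or_snd_eq hz hb).resolve_right (hza ▸ hab)).trans
        ((hs.boxProd_fst_eq_or_snd_eq ha hb).resolve_right hab).symm
    · exact (hs.boxProd_fst_eq_or_snd_eq hz ha).resolve_right hza
  exact fun z hz w hw => (hfst z hz).trans (hfst w hw).symm

theorem boxProd_mem_of_fst_eq_of_snd_eq {p : V × W} (hs : (G₁ □ G₂).IsClique s)
    (hx : x ∈ s) (hy : y ∈ s) (hxp : x.1 = p.1) (hyp : y.2 = p.2) : p ∈ s := by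
  rcases hs.boxProd_fst_eq_or_snd_eq hx hy with h | h
  · rwa [← Prod.ext (h.symm.trans hxp) hyp]
  · rwa [← Prod.ext hxp (h.trans hyp)]

theorem boxProd_image_fst {h : W} (hs : (G₁ □ G₂).IsClique s) (hsh : ∀ x ∈ s, x.2 = h) :
    G₁.IsClique (Prod.fst '' s) := by
  rintro _ ⟨x, hx, rfl⟩ _ ⟨y, hy, rfl⟩ hxy
  rcases boxProd_adj.1 (hs hx hy (ne_of_apply_ne _ hxy)) with ⟨hadj, -⟩ | ⟨hadj, -⟩
  · exact hadj
  · exact (hadj.ne ((hsh x hx).trans (hsh y hy).symm)).elim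

theorem boxProd_image_snd {g : V} (hs : (G₁ □ G₂).IsClique s) (hsg : ∀ x ∈ s, x.1 = g) :
    G₂.IsClique (Prod.snd '' s) := by
  rintro _ ⟨x, hx, rfl⟩ _ ⟨y, hy, rfl⟩ hxy
  rcases boxProd_adj.1 (hs hx hy (ne_of_apply_ne _ hxy)) with ⟨hadj, -⟩ | ⟨hadj, -⟩
  · exact (hadj.ne ((hsg x hx).trans (hsg y hy).symm)).elim
  · exact hadj

theorem boxProd_prod_singleton {Q : Set V} (hQ : G₁.IsClique Q) (h : W) :
    (G₁ □ G₂).IsClique (Q ×ˢ {h}) := by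
  rintro ⟨a, _⟩ ⟨ha, ha'⟩ ⟨b, _⟩ ⟨hb, hb'⟩ hab
  subst ha' hb'
  exact boxProd_adj_left.2 (hQ ha hb fun e => hab (e ▸ rfl))

theorem boxProd_singleton_prod {R : Set W} (hR : G₂.IsClique R) (g : V) :
    (G₁ □ G₂).IsClique ({g} ×ˢ R) := by
  rintro ⟨_, a⟩ ⟨ha', ha⟩ ⟨_, b⟩ ⟨hb', hb⟩ hab
  subst ha' hb'
  exact boxProd_adj_right.2 (hR ha hb fun e => hab (e ▸ rfl))

end SimpleGraph.IsClique

theorem image_fst_mem_maxCliques {h : W} (hs : s ∈ maxCliques (G₁ □ G₂))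
    (hsh : ∀ x ∈ s, x.2 = h) : Prod.fst '' s ∈ maxCliques G₁ := by
  refine ⟨hs.1.boxProd_image_fst hsh, fun Q hQ hsQ => ?_⟩
  have hsQh : s ⊆ Q ×ˢ {h} := fun x hx => ⟨hsQ (Set.mem_image_of_mem _ hx), hsh x hx⟩
  rw [hs.2 _ (hQ.boxProd_prod_singleton h) hsQh, Set.fst_image_prod _ (Set.singleton_nonempty h)]

theorem image_snd_mem_maxCliques {g : V} (hs : s ∈ maxCliques (G₁ □ G₂))
    (hsg : ∀ x ∈ s, x.1 = g) : Prod.snd '' s ∈ maxCliques G₂ := by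
  refine ⟨hs.1.boxProd_image_snd hsg, fun R hR hsR => ?_⟩
  have hsgR : s ⊆ {g} ×ˢ R := fun x hx => ⟨hsg x hx, hsR (Set.mem_image_of_mem _ hx)⟩
  rw [hs.2 _ (hR.boxProd_singleton_prod g) hsgR, Set.snd_image_prod (Set.singleton_nonempty g)]

theorem prod_singleton_mem_maxCliques {Q : Set V} {a b : V} (hQ : Q ∈ maxCliques G₁)
    (ha : a ∈ Q) (hb : b ∈ Q) (hab : a ≠ b) (h : W) :
    Q ×ˢ {h} ∈ maxCliques (G₁ □ G₂) := by
  refine ⟨hQ.1.boxProd_prod_singleton h, fun t ht hQt => ?_⟩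
  have hth : ∀ z ∈ t, z.2 = h := fun z hz => by
    by_contra hzh
    have hza := ht.boxProd_fst_eq_or_snd_eq hz (hQt (Set.mk_mem_prod ha rfl))
    have hzb := ht.boxProd_fst_eq_or_snd_eq hz (hQt (Set.mk_mem_prod hb rfl))
    exact hab ((hza.resolve_right hzh).symm.trans (hzb.resolve_right hzh))
  have hQt' : Q = Prod.fst '' t :=
    hQ.2 _ (ht.boxProd_image_fst hth) fun q hq => ⟨(q, h), hQt ⟨hq, rfl⟩, rfl⟩
  exact hQt.antisymm fun z hz => ⟨hQt' ▸ Set.mem_image_of_mem _ hz, hth z hz⟩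

theorem singleton_prod_mem_maxCliques {R : Set W} {a b : W} (hR : R ∈ maxCliques G₂)
    (ha : a ∈ R) (hb : b ∈ R) (hab : a ≠ b) (g : V) :
    {g} ×ˢ R ∈ maxCliques (G₁ □ G₂) := by
  refine ⟨hR.1.boxProd_singleton_prod g, fun t ht hRt => ?_⟩
  have htg : ∀ z ∈ t, z.1 = g := fun z hz => by
    by_contra hzg
    have hza := ht.boxProd_fst_eq_or_snd_eq hz (hRt (Set.mk_mem_prod rfl ha))
    have hzb := ht.boxProd_fst_eq_or_snd_eq hz (hRt (Set.mk_mem_prod rfl hb))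
    exact hab ((hza.resolve_left hzg).symm.trans (hzb.resolve_left hzg))
  have hRt' : R = Prod.snd '' t :=
    hR.2 _ (ht.boxProd_image_snd htg) fun r hr => ⟨(g, r), hRt ⟨rfl, hr⟩, rfl⟩
  exact hRt.antisymm fun z hz => ⟨htg z hz, hRt' ▸ Set.mem_image_of_mem _ hz⟩

theorem exists_prod_singleton_mem_maxCliques [Finite V] (hG₁ : ∀ a : V, ∃ b, G₁.Adj a b)
    (g : V) (h : W) : ∃ Q, g ∈ Q ∧ Q ×ˢ {h} ∈ maxCliques (G₁ □ G₂) := by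
  obtain ⟨b, hgb⟩ := hG₁ g
  obtain ⟨Q, hQ, hgbQ⟩ := (G₁.isClique_pair.2 fun _ => hgb).exists_subset_mem_maxCliques
  exact ⟨Q, hgbQ (Set.mem_insert _ _), prod_singleton_mem_maxCliques hQ
    (hgbQ (Set.mem_insert _ _)) (hgbQ (Set.mem_insert_of_mem _ rfl)) hgb.ne h⟩

theorem exists_singleton_prod_mem_maxCliques [Finite W] (hG₂ : ∀ a : W, ∃ b, G₂.Adj a b)
    (g : V) (h : W) : ∃ R, h ∈ R ∧ {g} ×ˢ R ∈ maxCliques (G₁ □ G₂) := by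
  obtain ⟨b, hhb⟩ := hG₂ h
  obtain ⟨R, hR, hhbR⟩ := (G₂.isClique_pair.2 fun _ => hhb).exists_subset_mem_maxCliques
  exact ⟨R, hhbR (Set.mem_insert _ _), singleton_prod_mem_maxCliques hR
    (hhbR (Set.mem_insert _ _)) (hhbR (Set.mem_insert_of_mem _ rfl)) hhb.ne g⟩

theorem cliqueStarsSeparated_boxProd [Finite V] [Finite W] (hG₁ : ∀ a : V, ∃ b, G₁.Adj a b)
    (hG₂ : ∀ a : W, ∃ b, G₂.Adj a b) : CliqueStarsSeparated (G₁ □ G₂) := by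
  intro p q hpq
  obtain ⟨Q, hpQ, hQ⟩ := exists_prod_singleton_mem_maxCliques (G₂ := G₂) hG₁ p.1 p.2
  obtain ⟨R, hpR, hR⟩ := exists_singleton_prod_mem_maxCliques (G₁ := G₁) hG₂ p.1 p.2
  have hqQ : q ∈ Q ×ˢ {p.2} := @hpq ⟨_, hQ⟩ ⟨hpQ, rfl⟩
  have hqR : q ∈ {p.1} ×ˢ R := @hpq ⟨_, hR⟩ ⟨rfl, hpR⟩
  exact Prod.ext hqR.1.symm hqQ.2.symm

variable {F : Set (Set (V × W))}

theorem CliqueHelly.iInter_nonempty_of_forall_snd_eq (hH₁ : CliqueHelly G₁)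
    (hF : F.Nonempty) (hFmax : ∀ s ∈ F, s ∈ maxCliques (G₁ □ G₂))
    (hFint : ∀ s ∈ F, ∀ t ∈ F, (s ∩ t).Nonempty)
    (hFsnd : ∀ s ∈ F, ∀ x ∈ s, ∀ y ∈ s, x.2 = y.2) : (⋂ s ∈ F, s).Nonempty := by
  obtain ⟨s₀, hs₀⟩ := hF
  obtain ⟨p, hp, -⟩ := hFint s₀ hs₀ s₀ hs₀
  have hlevel : ∀ s ∈ F, ∀ x ∈ s, x.2 = p.2 := fun s hs x hx => by
    obtain ⟨q, hqs, hqs₀⟩ := hFint s hs s₀ hs₀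
    exact (hFsnd s hs x hx q hqs).trans (hFsnd s₀ hs₀ q hqs₀ p hp)
  obtain ⟨g, hg⟩ := hH₁ ((Prod.fst '' ·) '' F) ⟨_, Set.mem_image_of_mem _ hs₀⟩
    (by rintro _ ⟨s, hs, rfl⟩; exact image_fst_mem_maxCliques (hFmax s hs) (hlevel s hs))
    (by
      rintro _ ⟨s, hs, rfl⟩ _ ⟨t, ht, rfl⟩
      obtain ⟨q, hqs, hqt⟩ := hFint s hs t ht
      exact ⟨q.1, Set.mem_image_of_mem _ hqs, Set.mem_image_of_mem _ hqt⟩)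
  refine ⟨(g, p.2), Set.mem_iInter₂.2 fun s hs => ?_⟩
  obtain ⟨q, hq, rfl⟩ := Set.mem_iInter₂.1 hg _ (Set.mem_image_of_mem _ hs)
  rwa [← hlevel s hs q hq]

theorem CliqueHelly.iInter_nonempty_of_forall_fst_eq (hH₂ : CliqueHelly G₂)
    (hF : F.Nonempty) (hFmax : ∀ s ∈ F, s ∈ maxCliques (G₁ □ G₂))
    (hFint : ∀ s ∈ F, ∀ t ∈ F, (s ∩ t).Nonempty)
    (hFfst : ∀ s ∈ F, ∀ x ∈ s, ∀ y ∈ s, x.1 = y.1) : (⋂ s ∈ F, s).Nonempty := by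
  obtain ⟨s₀, hs₀⟩ := hF
  obtain ⟨p, hp, -⟩ := hFint s₀ hs₀ s₀ hs₀
  have hcol : ∀ s ∈ F, ∀ x ∈ s, x.1 = p.1 := fun s hs x hx => by
    obtain ⟨q, hqs, hqs₀⟩ := hFint s hs s₀ hs₀
    exact (hFfst s hs x hx q hqs).trans (hFfst s₀ hs₀ q hqs₀ p hp)
  obtain ⟨h, hh⟩ := hH₂ ((Prod.snd '' ·) '' F) ⟨_, Set.mem_image_of_mem _ hs₀⟩
    (by rintro _ ⟨s, hs, rfl⟩; exact image_snd_mem_maxCliques (hFmax s hs) (hcol s hs))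
    (by
      rintro _ ⟨s, hs, rfl⟩ _ ⟨t, ht, rfl⟩
      obtain ⟨q, hqs, hqt⟩ := hFint s hs t ht
      exact ⟨q.2, Set.mem_image_of_mem _ hqs, Set.mem_image_of_mem _ hqt⟩)
  refine ⟨(p.1, h), Set.mem_iInter₂.2 fun s hs => ?_⟩
  obtain ⟨q, hq, rfl⟩ := Set.mem_iInter₂.1 hh _ (Set.mem_image_of_mem _ hs)
  rwa [← hcol s hs q hq]

theorem CliqueHelly.boxProd (hH₁ : CliqueHelly G₁) (hH₂ : CliqueHelly G₂) :
    CliqueHelly (G₁ □ G₂) := by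
  intro F hF hFmax hFint
  by_cases hFsnd : ∀ s ∈ F, ∀ x ∈ s, ∀ y ∈ s, x.2 = y.2
  · exact hH₁.iInter_nonempty_of_forall_snd_eq hF hFmax hFint hFsnd
  by_cases hFfst : ∀ s ∈ F, ∀ x ∈ s, ∀ y ∈ s, x.1 = y.1
  · exact hH₂.iInter_nonempty_of_forall_fst_eq hF hFmax hFint hFfst
  obtain ⟨s, hs, hs_not_snd⟩ : ∃ s ∈ F, ¬∀ x ∈ s, ∀ y ∈ s, x.2 = y.2 := by
    simpa only [not_forall, exists_prop] using hFsnd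
  obtain ⟨t, ht, ht_not_fst⟩ : ∃ t ∈ F, ¬∀ x ∈ t, ∀ y ∈ t, x.1 = y.1 := by
    simpa only [not_forall, exists_prop] using hFfst
  have hs_fst := ((hFmax s hs).1.boxProd_snd_eq_or_fst_eq).resolve_left hs_not_snd
  have ht_snd := ((hFmax t ht).1.boxProd_snd_eq_or_fst_eq).resolve_right ht_not_fst
  obtain ⟨p, hps, hpt⟩ := hFint s hs t ht
  refine ⟨p, Set.mem_iInter₂.2 fun r hr => ?_⟩
  obtain ⟨x, hxr, hxs⟩ := hFint r hr s hs
  obtain ⟨y, hyr, hyt⟩ := hFint r hr t ht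
  exact (hFmax r hr).1.boxProd_mem_of_fst_eq_of_snd_eq hxr hyr
    (hs_fst x hxs p hps) (ht_snd y hyt p hpt)

end BoxProd

/-- If `G₁`, `G₂` are finite clique-Helly graphs, each with at least two vertices and
no isolated vertices, then `K²(G₁ □ G₂) ≅ G₁ □ G₂`. -/
theorem cliqueGraph_sq_boxProd {V₁ V₂ : Type u} [Finite V₁] [Finite V₂]
    [Nontrivial V₁] [Nontrivial V₂] (G₁ : SimpleGraph V₁) (G₂ : SimpleGraph V₂)
    (hH₁ : CliqueHelly G₁) (hH₂ : CliqueHelly G₂)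
    (hiso₁ : ∀ v : V₁, ∃ u : V₁, G₁.Adj v u) (hiso₂ : ∀ v : V₂, ∃ u : V₂, G₂.Adj v u) :
    Nonempty (cliqueGraph (cliqueGraph (G₁ □ G₂)) ≃g (G₁ □ G₂)) :=
  (hH₁.boxProd hH₂).nonempty_iso_cliqueGraph_cliqueGraph
    (cliqueStarsSeparated_boxProd hiso₁ hiso₂)
end

section
/- Let G₁ and G₂ be finite clique-Helly simple graphs, each having at least two vertices and no isolated vertices, and let G = G₁ □ G₂. Then for every vertex v of G, the family A_v = { Q : Q a clique of G with v ∈ Q } is a clique of the clique graph K(G), i.e., a maximal family of pairwise intersecting cliques of G. -/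
/-!
Write `v = (a, b)`. Since `a` and `b` are not isolated, they lie in cliques `D₁` of `G₁` and `D₂`
of `G₂` with at least two vertices each, and then the row `D₁ × {b}` and the column `{a} × D₂`
are cliques of `G₁ □ G₂` through `v`. A vertex of the row and a vertex of the column are equal or
adjacent only if one of them is `v`. Hence a clique of `G₁ □ G₂` meeting both of them contains
`v`, so no clique avoiding `v` meets every clique through `v`.
-/

open SimpleGraph

universe u v

theorem SimpleGraph.IsClique.exists_isMaxClique_superset {V : Type*} {G : SimpleGraph V}
    {s : Set V} (hs : G.IsClique s) : ∃ t, s ⊆ t ∧ IsMaxClique G t := by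
  obtain ⟨t, hst, ht⟩ := zorn_subset_nonempty {s | G.IsClique s}
    (fun c hc hchain _ ↦ ⟨⋃₀ c, (isClique_sUnion hchain.directedOn).2 hc,
      fun _ ↦ Set.subset_sUnion_of_mem⟩) s hs
  exact ⟨t, hst, ht.prop, fun _ hu htu ↦ ht.eq_of_subset hu htu⟩

theorem SimpleGraph.IsClique.image_iso {V W : Type*} {G : SimpleGraph V} {H : SimpleGraph W}
    {s : Set V} (hs : G.IsClique s) (e : G ≃g H) : H.IsClique (e '' s) := by
  rintro _ ⟨x, hx, rfl⟩ _ ⟨y, hy, rfl⟩ hxy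
  exact e.map_adj_iff.2 (hs hx hy (ne_of_apply_ne e hxy))

theorem IsMaxClique.image_iso {V W : Type*} {G : SimpleGraph V} {H : SimpleGraph W}
    {s : Set V} (hs : IsMaxClique G s) (e : G ≃g H) : IsMaxClique H (e '' s) := by
  refine ⟨hs.1.image_iso e, fun t ht hst ↦ ?_⟩
  have hs_eq : s = e.symm '' t :=
    hs.2 _ (ht.image_iso e.symm) fun x hx ↦ ⟨e x, hst ⟨x, hx, rfl⟩, e.symm_apply_apply x⟩
  rw [hs_eq, ← Set.image_comp]
  simp

theorem setOf_mem_mem_maxCliques_cliqueGraph {V : Type*} {G : SimpleGraph V} {v : V}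
    {R₁ R₂ : Set V} (h₁ : IsMaxClique G R₁) (h₂ : IsMaxClique G R₂) (hv₁ : v ∈ R₁)
    (hv₂ : v ∈ R₂) (hsep : ∀ x ∈ R₁, ∀ y ∈ R₂, G.IsClique {x, y} → x = v ∨ y = v) :
    {Q : ↥(maxCliques G) | v ∈ (Q : Set V)} ∈ maxCliques (cliqueGraph G) := by
  refine ⟨fun Q hQ R hR hQR ↦ ⟨hQR, v, hQ, hR⟩, fun t ht hsub ↦ ?_⟩
  refine hsub.antisymm fun Q hQ ↦ ?_
  by_contra hvQ
  have meets : ∀ R : ↥(maxCliques G), v ∈ (R : Set V) → ((Q : Set V) ∩ R).Nonempty :=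
    fun R hvR ↦ (ht hQ (hsub hvR) (by rintro rfl; exact hvQ hvR)).2
  obtain ⟨x, hxQ, hx⟩ := meets ⟨R₁, h₁⟩ hv₁
  obtain ⟨y, hyQ, hy⟩ := meets ⟨R₂, h₂⟩ hv₂
  rcases hsep x hx y hy (Q.2.1.subset (Set.pair_subset hxQ hyQ)) with rfl | rfl
  exacts [hvQ hxQ, hvQ hyQ]

section boxProd

variable {V₁ V₂ : Type*} {G₁ : SimpleGraph V₁} {G₂ : SimpleGraph V₂}

theorem IsMaxClique.prod_singleton_boxProd {D : Set V₁} (hD : IsMaxClique G₁ D)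
    (hD' : D.Nontrivial) (b : V₂) : IsMaxClique (G₁ □ G₂) (D ×ˢ {b}) := by
  refine ⟨?_, fun t ht hsub ↦ hsub.antisymm fun w hw ↦ ?_⟩
  · rintro ⟨x, _⟩ ⟨hx, rfl⟩ ⟨y, _⟩ ⟨hy, rfl⟩ hxy
    exact boxProd_adj_left.2 (hD.1 hx hy fun h ↦ hxy (h ▸ rfl))
  -- Off row `b`, `w` is adjacent to `(c, b)` only if `w.1 = c`, impossible for two distinct `c`.
  have hwb : w.2 = b := by
    obtain ⟨c₁, hc₁, c₂, hc₂, hc⟩ := hD'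
    by_contra hwb
    have hw_fst : ∀ c ∈ D, w.1 = c := fun c hc ↦ by
      have hne : w ≠ (c, b) := fun h ↦ hwb (h ▸ rfl)
      rcases boxProd_adj.1 (ht hw (hsub (Set.mk_mem_prod hc rfl)) hne) with ⟨-, h⟩ | ⟨-, h⟩
      exacts [absurd h hwb, h]
    exact hc ((hw_fst c₁ hc₁).symm.trans (hw_fst c₂ hc₂))
  have hfst : G₁.IsClique (Prod.fst '' t) := by
    rintro _ ⟨x, hx, rfl⟩ _ ⟨y, hy, rfl⟩ hxy
    rcases boxProd_adj.1 (ht hx hy fun h ↦ hxy (h ▸ rfl)) with ⟨h, -⟩ | ⟨-, h⟩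
    exacts [h, absurd h hxy]
  have hD_eq : D = Prod.fst '' t :=
    hD.2 _ hfst fun c hc ↦ ⟨(c, b), hsub (Set.mk_mem_prod hc rfl), rfl⟩
  exact ⟨hD_eq ▸ ⟨w, hw, rfl⟩, hwb⟩

theorem IsMaxClique.singleton_prod_boxProd {D : Set V₂} (hD : IsMaxClique G₂ D)
    (hD' : D.Nontrivial) (a : V₁) : IsMaxClique (G₁ □ G₂) ({a} ×ˢ D) := by
  have hswap : ⇑(boxProdComm G₂ G₁) = Prod.swap := rfl
  simpa only [hswap, Set.image_swap_prod] using
    (hD.prod_singleton_boxProd (G₂ := G₁) hD' a).image_iso (boxProdComm G₂ G₁)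

theorem eq_or_eq_of_isClique_pair_boxProd {a x : V₁} {b y : V₂}
    (h : (G₁ □ G₂).IsClique {(x, b), (a, y)}) : x = a ∨ b = y := by
  by_cases hxa : x = a
  · exact .inl hxa
  rw [isClique_pair] at h
  rcases boxProd_adj.1 (h (by simp [hxa])) with ⟨-, hby⟩ | ⟨-, hxa'⟩
  exacts [.inr hby, .inl hxa']

end boxProd

theorem cliquesThrough_vertex_maxClique_boxProd_general {V₁ V₂ : Type u}
    (G₁ : SimpleGraph V₁) (G₂ : SimpleGraph V₂)
    (hiso₁ : ∀ v : V₁, ∃ u : V₁, G₁.Adj v u) (hiso₂ : ∀ v : V₂, ∃ u : V₂, G₂.Adj v u)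
    (v : V₁ × V₂) :
    {Q : ↥(maxCliques (G₁ □ G₂)) | v ∈ (Q : Set (V₁ × V₂))}
      ∈ maxCliques (cliqueGraph (G₁ □ G₂)) := by
  obtain ⟨a, b⟩ := v
  obtain ⟨u₁, hu₁⟩ := hiso₁ a
  obtain ⟨u₂, hu₂⟩ := hiso₂ b
  obtain ⟨D₁, hauD₁, hD₁⟩ := (isClique_pair.2 fun _ ↦ hu₁).exists_isMaxClique_superset
  obtain ⟨D₂, hbuD₂, hD₂⟩ := (isClique_pair.2 fun _ ↦ hu₂).exists_isMaxClique_superset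
  have haD₁ : a ∈ D₁ := hauD₁ (Set.mem_insert _ _)
  have hbD₂ : b ∈ D₂ := hbuD₂ (Set.mem_insert _ _)
  refine setOf_mem_mem_maxCliques_cliqueGraph
    (hD₁.prod_singleton_boxProd ⟨a, haD₁, u₁, hauD₁ (by simp), hu₁.ne⟩ b)
    (hD₂.singleton_prod_boxProd ⟨b, hbD₂, u₂, hbuD₂ (by simp), hu₂.ne⟩ a)
    ⟨haD₁, rfl⟩ ⟨rfl, hbD₂⟩ ?_
  rintro ⟨x, _⟩ ⟨-, rfl⟩ ⟨_, y⟩ ⟨rfl, -⟩ hxy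
  rcases eq_or_eq_of_isClique_pair_boxProd hxy with rfl | rfl <;> simp

/-- Let `G = G₁ □ G₂` where `G₁`, `G₂` are finite clique-Helly graphs, each with at least
two vertices and no isolated vertices. Then for every vertex `v` of `G`, the family of all
cliques of `G` containing `v` is a clique of the clique graph `K(G)`. -/
theorem cliquesThrough_vertex_maxClique_boxProd {V₁ V₂ : Type u} [Finite V₁] [Finite V₂]
    [Nontrivial V₁] [Nontrivial V₂] (G₁ : SimpleGraph V₁) (G₂ : SimpleGraph V₂)
    (hH₁ : CliqueHelly G₁) (hH₂ : CliqueHelly G₂)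
    (hiso₁ : ∀ v : V₁, ∃ u : V₁, G₁.Adj v u) (hiso₂ : ∀ v : V₂, ∃ u : V₂, G₂.Adj v u)
    (v : V₁ × V₂) :
    {Q : ↥(maxCliques (G₁ □ G₂)) | v ∈ (Q : Set (V₁ × V₂))}
      ∈ maxCliques (cliqueGraph (G₁ □ G₂)) :=
  cliquesThrough_vertex_maxClique_boxProd_general G₁ G₂ hiso₁ hiso₂ v
end
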